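/- Define k₂(v,u) = (2 s^{3/2}/(g u₀ v₀)) U₁ e^{-U₂}, where U₂ = √s |u-v|/(2g), U₁ = (1 + ((u₀+v₀)/2) U₂^{-1} + ((u₀+v₀)/2) U₂^{-2}) U₂^{-1}, and u₀ = √(1+|u|²), v₀ = √(1+|v|²), s = 2(u₀v₀ - u·v + 1), g = √(s-4). Then there exists C > 0 such that k₂(v,u) ≤ C (max{u₀,v₀} |u-v|)^{-1} e^{-|u-v|/4} for all u ≠ v. -/

import Mathlib

open MeasureTheory Real
open scoped RealInnerProductSpace

noncomputable def energy (v : EuclideanSpace ℝ (Fin 3)) : ℝ := Real.sqrt (1 + ‖v‖ ^ 2)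

noncomputable def sVar (u v : EuclideanSpace ℝ (Fin 3)) : ℝ :=
  2 * (energy u * energy v - ⟪u, v⟫ + 1)

noncomputable def relMom (u v : EuclideanSpace ℝ (Fin 3)) : ℝ :=
  Real.sqrt (sVar u v - 4)

noncomputable def U2 (v u : EuclideanSpace ℝ (Fin 3)) : ℝ :=
  Real.sqrt (sVar u v) * ‖u - v‖ / (2 * relMom u v)

noncomputable def U1 (v u : EuclideanSpace ℝ (Fin 3)) : ℝ :=
  (1 + (energy u + energy v) / 2 * (U2 v u)⁻¹ + (energy u + energy v) / 2 * (U2 v u)⁻¹ ^ 2) *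
    (U2 v u)⁻¹

/-- The gain-term kernel `k₂` of the compact part of the linearized collision operator. -/
noncomputable def k2 (v u : EuclideanSpace ℝ (Fin 3)) : ℝ :=
  2 * (sVar u v) ^ ((3 : ℝ) / 2) / (relMom u v * energy u * energy v) * U1 v u *
    Real.exp (-U2 v u)

/-! Write `A = u₀`, `B = v₀`, `r = |u - v|`. The identity `s - 4 = r² - (A - B)²` gives
`g ≤ r` and `|A - B| ≤ r`, while `g < √s`; hence `U₂ = √s r / (2g)` dominates both `r / 2` and
`√s / 2 ≥ 1`. Substituting `√s / g = 2U₂ / r` turns `k₂` into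
`4s / (r A B) · (1 + w/U₂ + w/U₂²) · e^{-U₂}` with `w = (A + B)/2 ≤ min A B · (1 + 2U₂)`, so the
bracket is at most `7 min A B`, and `min A B / (A B) = 1 / max A B`. Finally
`e^{-U₂} ≤ e^{-√s/4} e^{-r/4}`, and the factor `s e^{-√s/4}` is bounded. -/

lemma sq_mul_exp_neg_div_four_le {x : ℝ} (hx : 0 ≤ x) : x ^ 2 * exp (-x / 4) ≤ 32 := by
  have h := pow_div_factorial_le_exp _ (div_nonneg hx (by norm_num : (0 : ℝ) ≤ 4)) 2
  rw [neg_div, exp_neg, ← div_eq_mul_inv, div_le_iff₀ (exp_pos _)]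
  norm_num [Nat.factorial] at h
  linarith

lemma min_div_mul_eq_one_div_max {a b : ℝ} (ha : 0 < a) (hb : 0 < b) :
    min a b / (a * b) = 1 / max a b := by
  rw [← max_mul_min a b]
  field_simp [(lt_max_of_lt_left ha).ne', (lt_min ha hb).ne']

lemma one_add_div_add_div_sq_le {w m U : ℝ} (hm : 1 ≤ m) (hU : 1 ≤ U)
    (hw : w ≤ m * (1 + 2 * U)) : 1 + w / U + w / U ^ 2 ≤ 7 * m := by
  have hU0 : 0 < U := one_pos.trans_le hU
  have hwU : w / U ≤ 3 * m := by
    rw [div_le_iff₀ hU0]; nlinarith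
  have hwU2 : w / U ^ 2 ≤ 3 * m := by
    rw [div_le_iff₀ (by positivity)]
    nlinarith [mul_nonneg (zero_le_one.trans hm) (sub_nonneg.mpr hU)]
  linarith

section Kinematics

variable {u v : EuclideanSpace ℝ (Fin 3)}

lemma energy_sq (u : EuclideanSpace ℝ (Fin 3)) : energy u ^ 2 = 1 + ‖u‖ ^ 2 :=
  sq_sqrt (by positivity)

lemma one_le_energy (u : EuclideanSpace ℝ (Fin 3)) : 1 ≤ energy u :=
  one_le_sqrt.mpr (by simp)

lemma one_add_inner_lt_energy_mul (huv : u ≠ v) : 1 + ⟪u, v⟫ < energy u * energy v := by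
  have hr : 0 < ‖u - v‖ := norm_pos_iff.mpr (sub_ne_zero.mpr huv)
  have hp : |⟪u, v⟫| ≤ ‖u‖ * ‖v‖ := abs_real_inner_le_norm u v
  -- `(u₀ v₀)² - (1 + ⟪u, v⟫)² = ‖u - v‖² + (‖u‖ ‖v‖)² - ⟪u, v⟫²`
  have key : (1 + ⟪u, v⟫) ^ 2 < (energy u * energy v) ^ 2 := by
    have := norm_sub_sq_real u v
    nlinarith [energy_sq u, energy_sq v, sq_abs ⟪u, v⟫,
      mul_self_le_mul_self (abs_nonneg _) hp]
  have hAB : 0 ≤ energy u * energy v := by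
    have := one_le_energy u; have := one_le_energy v; positivity
  exact (le_abs_self _).trans_lt (abs_lt_of_sq_lt_sq key hAB)

lemma sVar_sub_four_eq (u v : EuclideanSpace ℝ (Fin 3)) :
    sVar u v - 4 = ‖u - v‖ ^ 2 - (energy u - energy v) ^ 2 := by
  rw [sVar, norm_sub_sq_real]
  linear_combination energy_sq u + energy_sq v

lemma four_lt_sVar (huv : u ≠ v) : 4 < sVar u v := by
  have := one_add_inner_lt_energy_mul huv
  rw [sVar]; linarith

lemma relMom_sq (huv : u ≠ v) : relMom u v ^ 2 = sVar u v - 4 :=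
  sq_sqrt (by linarith [four_lt_sVar huv])

lemma relMom_pos (huv : u ≠ v) : 0 < relMom u v :=
  sqrt_pos.mpr (by linarith [four_lt_sVar huv])

lemma relMom_lt_sqrt_sVar (huv : u ≠ v) : relMom u v < √(sVar u v) :=
  sqrt_lt_sqrt (by linarith [four_lt_sVar huv]) (by linarith)

lemma relMom_le_norm_sub (huv : u ≠ v) : relMom u v ≤ ‖u - v‖ := by
  refine pow_le_pow_iff_left₀ (relMom_pos huv).le (norm_nonneg _) two_ne_zero |>.mp ?_
  rw [relMom_sq huv, sVar_sub_four_eq]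
  nlinarith

lemma abs_energy_sub_le_norm_sub (huv : u ≠ v) : |energy u - energy v| ≤ ‖u - v‖ := by
  refine sq_le_sq.mp ?_ |>.trans_eq (abs_norm _)
  have := relMom_sq huv
  rw [sVar_sub_four_eq] at this
  nlinarith

lemma half_norm_sub_le_U2 (huv : u ≠ v) : ‖u - v‖ / 2 ≤ U2 v u := by
  rw [U2, le_div_iff₀ (by linarith [relMom_pos huv])]
  have := relMom_lt_sqrt_sVar huv
  nlinarith [norm_nonneg (u - v)]

lemma half_sqrt_sVar_le_U2 (huv : u ≠ v) : √(sVar u v) / 2 ≤ U2 v u := by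
  rw [U2, le_div_iff₀ (by linarith [relMom_pos huv])]
  have := relMom_le_norm_sub huv
  nlinarith [sqrt_nonneg (sVar u v)]

lemma one_le_U2 (huv : u ≠ v) : 1 ≤ U2 v u := by
  have h4 : √4 < √(sVar u v) := sqrt_lt_sqrt (by norm_num) (four_lt_sVar huv)
  rw [show (4 : ℝ) = 2 ^ 2 by norm_num, sqrt_sq zero_le_two] at h4
  linarith [half_sqrt_sVar_le_U2 huv]

lemma k2_eq (huv : u ≠ v) :
    k2 v u = 4 * sVar u v / (‖u - v‖ * energy u * energy v) *
      (1 + (energy u + energy v) / 2 / U2 v u + (energy u + energy v) / 2 / U2 v u ^ 2) *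
        exp (-U2 v u) := by
  have hs : sVar u v ^ ((3 : ℝ) / 2) = sVar u v * √(sVar u v) := by
    rw [sqrt_eq_rpow, ← rpow_one_add' (by linarith [four_lt_sVar huv]) (by norm_num)]
    norm_num
  have hr : ‖u - v‖ ≠ 0 := norm_ne_zero_iff.mpr (sub_ne_zero.mpr huv)
  have hg := relMom_pos huv
  have ht := sqrt_pos.mpr (by linarith [four_lt_sVar huv] : 0 < sVar u v)
  have hA := one_le_energy u
  have hB := one_le_energy v
  rw [k2, U1, U2, hs]
  field_simp
  ring

lemma energy_add_div_two_le (huv : u ≠ v) :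
    (energy u + energy v) / 2 ≤ min (energy u) (energy v) * (1 + 2 * U2 v u) := by
  have hgap : max (energy u) (energy v) - min (energy u) (energy v) ≤ ‖u - v‖ :=
    (max_sub_min_eq_abs' _ _).trans_le (abs_energy_sub_le_norm_sub huv)
  have hmin : 1 ≤ min (energy u) (energy v) := le_min (one_le_energy u) (one_le_energy v)
  nlinarith [half_norm_sub_le_U2 huv, one_le_U2 huv, le_max_left (energy u) (energy v),
    le_max_right (energy u) (energy v)]

lemma exp_neg_U2_le (huv : u ≠ v) :
    exp (-U2 v u) ≤ exp (-√(sVar u v) / 4) * exp (-‖u - v‖ / 4) := by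
  rw [← exp_add, exp_le_exp]
  linarith [half_norm_sub_le_U2 huv, half_sqrt_sVar_le_U2 huv]

end Kinematics

/-- Pointwise upper bound on the kernel `k₂`. -/
theorem k2_bound :
    ∃ C > 0, ∀ u v : EuclideanSpace ℝ (Fin 3), u ≠ v →
      k2 v u ≤ C / (max (energy u) (energy v) * ‖u - v‖) * Real.exp (-‖u - v‖ / 4) := by
  refine ⟨896, by norm_num, fun u v huv => ?_⟩
  set A := energy u
  set B := energy v
  set r := ‖u - v‖
  set s := sVar u v
  set U := U2 v u
  have hA : 1 ≤ A := one_le_energy u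
  have hB : 1 ≤ B := one_le_energy v
  have hs : 0 ≤ s := by linarith [four_lt_sVar huv]
  have hbracket : 1 + (A + B) / 2 / U + (A + B) / 2 / U ^ 2 ≤ 7 * min A B :=
    one_add_div_add_div_sq_le (le_min hA hB) (one_le_U2 huv) (energy_add_div_two_le huv)
  have hsexp : s * exp (-√s / 4) ≤ 32 := by
    simpa [sq_sqrt hs] using sq_mul_exp_neg_div_four_le (sqrt_nonneg s)
  calc k2 v u = 4 * s / (r * A * B) * (1 + (A + B) / 2 / U + (A + B) / 2 / U ^ 2) * exp (-U) :=
        k2_eq huv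
    _ ≤ 4 * s / (r * A * B) * (7 * min A B) * (exp (-√s / 4) * exp (-r / 4)) := by
        gcongr
        exact exp_neg_U2_le huv
    _ = 28 * (s * exp (-√s / 4)) * (min A B / (A * B)) / r * exp (-r / 4) := by ring
    _ ≤ 28 * 32 * (1 / max A B) / r * exp (-r / 4) := by
        rw [min_div_mul_eq_one_div_max (by positivity) (by positivity)]
        gcongr
    _ = 896 / (max A B * r) * exp (-r / 4) := by field_simp; ring
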